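/- Let m be an even positive integer and let e_0 = 1, e_1, …, e_{l−1}, e_l = m−1 be positive integers with e_i | e_{i+1} and e_i ≠ e_{i+1} for all i; set f_j = (m−1)/e_j. Let γ_j ∈ F_{2^{e_j}} (0 ≤ j ≤ l−1) satisfy Σ_{i=0}^{j} γ_i ≠ 0 for every j = 0,1,…,l−1. Define Q_j(x) = Tr^{m−1}_1( Σ_{i=1}^{(f_j−1)/2} x^{2^{i e_j}+1} ) and f(x₁,x₂) = Σ_{j=0}^{l−1} Q_j(γ_j x₁) + x₂ Tr^{m−1}_1(x₁) on F_{2^{m−1}} × F_2. Then f is a cyclic bent function. -/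

import Mathlib

open Finset

noncomputable section

abbrev Fq (n : ℕ) := GaloisField 2 n

noncomputable instance (n : ℕ) : Fintype (Fq n) := Fintype.ofFinite _

/-- Absolute trace from `F_{2^n}` to `F_2`. -/
noncomputable def tr1 (n : ℕ) (x : Fq n) : ZMod 2 :=
  Algebra.trace (ZMod 2) (Fq n) x

/-- `(-1)^x` for `x : F_2`, as an integer. -/
def chi (x : ZMod 2) : ℤ := (-1 : ℤ) ^ x.val

/-- Walsh transform of a Boolean function on `F_{2^n} × F_2`. -/
noncomputable def walsh (n : ℕ) (f : Fq n × ZMod 2 → ZMod 2)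
    (lam : Fq n) (nu : ZMod 2) : ℤ :=
  ∑ x : Fq n × ZMod 2, chi (f x + tr1 n (lam * x.1) + nu * x.2)

/-- A Boolean function on `F_{2^{m-1}} × F_2` is bent if all its Walsh coefficients
are `± 2^(m/2)`. -/
def IsBent (m : ℕ) (f : Fq (m - 1) × ZMod 2 → ZMod 2) : Prop :=
  ∀ lam nu, walsh (m - 1) f lam nu = 2 ^ (m / 2) ∨ walsh (m - 1) f lam nu = -(2 ^ (m / 2))

/-- Cyclic bent function on `F_{2^{m-1}} × F_2`. -/
def IsCyclicBent (m : ℕ) (f : Fq (m - 1) × ZMod 2 → ZMod 2) : Prop :=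
  ∀ a b : Fq (m - 1), a ≠ b → ∀ ε : ZMod 2,
    IsBent m fun x => f (a * x.1, x.2) + f (b * x.1, x.2 + ε)

/-- The quadratic function `Q_j(x) = Tr^{m-1}_1 (Σ_{i=1}^{(f_j-1)/2} x^{2^{i e_j}+1})`,
where `f_j = (m-1)/e_j`. -/
noncomputable def Qfun (m e : ℕ) (x : Fq (m - 1)) : ZMod 2 :=
  tr1 (m - 1) (∑ i ∈ Finset.Icc 1 (((m - 1) / e - 1) / 2), x ^ (2 ^ (i * e) + 1))

/-!
Write `F(x) = f(a x₁, x₂) + f(b x₁, x₂ + ε)`. Every `Q_j` is quadratic, so the second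
differences `F(x + u) + F(x) + F(u) + F(0)` are additive in `x`, and the square of every Walsh
coefficient of `F` is `2^m` as soon as the radical (the `u` whose second difference vanishes
identically) is trivial. With `c = a + b`, a point `(u₁, u₂)` is in the radical iff
`Tr(c u₁) = 0` and `a K(a u₁) + b K(b u₁) = u₂ c`, where `Q(y + v) + Q(y) + Q(v) = Tr(y K(v))`
for `Q = ∑ Q_j(γ_j ·)`; with `t = a / c` and `Y = c u₁` this is an equation `Ψ_l(t, Y) = u₂`
between linearized polynomials.

Since `G = γ₀ + ⋯ + γ_{l-1} ≠ 0`, that equation has the form `G² Y = B + C t` with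
`B, C ∈ F_{2^{e_{l-1}}}`, so the relative trace onto `F_{2^{e_{l-1}}}` is multiplicative on `t, Y`;
applying it gives `Ψ_{l-1}(τ, υ) = u₂` for the traces `τ, υ` of `t, Y`, and `Tr(υ) = Tr(Y) = 0`.
At `l = 0` the equation says `u₂ = 0` and the trace condition says `υ = 0`; going back up,
`B = C = 0` at every level, hence `Y = 0`.
-/

section SecondDifference

variable {V : Type*} [AddCommGroup V]

def secondDiff (H : V → ZMod 2) (u x : V) : ZMod 2 := H (x + u) + H x + H u + H 0

lemma chi_add (p q : ZMod 2) : chi (p + q) = chi p * chi q := by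
  revert p q; decide

lemma sum_chi_eq_zero [Fintype V] {φ : V → ZMod 2} (hφ : ∀ x y, φ (x + y) = φ x + φ y)
    {x₀ : V} (h : φ x₀ ≠ 0) : ∑ x, chi (φ x) = 0 := by
  have hneg : ∀ x, chi (φ (x + x₀)) = -chi (φ x) := by
    intro x
    rw [hφ, chi_add, (by decide : ∀ a : ZMod 2, a ≠ 0 → a = 1) _ h]
    exact mul_neg_one _
  have hshift := Fintype.sum_equiv (Equiv.addRight x₀) (fun x => chi (φ (x + x₀)))
    (fun x => chi (φ x)) fun _ => rfl
  simp only [hneg, Finset.sum_neg_distrib] at hshift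
  omega

lemma secondDiff_add_of_additive {H φ : V → ZMod 2} (hφ : ∀ x y, φ (x + y) = φ x + φ y)
    (u x : V) : secondDiff (fun x => H x + φ x) u x = secondDiff H u x := by
  have h0 : φ 0 = 0 := by simpa using hφ 0 0
  simp only [secondDiff, hφ, h0]
  linear_combination (φ x + φ u) * CharTwo.two_eq_zero (R := ZMod 2)

theorem sq_sum_chi_eq_card [Fintype V] (H : V → ZMod 2)
    (hadd : ∀ u x y, secondDiff H u (x + y) = secondDiff H u x + secondDiff H u y)
    (hrad : ∀ u, (∀ x, secondDiff H u x = 0) → u = 0) :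
    (∑ x, chi (H x)) ^ 2 = Fintype.card V := by
  have hsplit : ∀ u x, chi (H x + H (x + u)) = chi (secondDiff H u x) * chi (H u + H 0) := by
    intro u x
    rw [← chi_add, secondDiff]
    congr 1
    linear_combination (-(H u + H 0)) * CharTwo.two_eq_zero (R := ZMod 2)
  have hinner : ∀ u, u ≠ 0 → ∑ x, chi (H x + H (x + u)) = 0 := by
    intro u hu
    obtain ⟨x₀, hx₀⟩ := not_forall.mp (mt (hrad u) hu)
    simp only [hsplit, ← Finset.sum_mul, sum_chi_eq_zero (hadd u) hx₀, zero_mul]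
  calc (∑ x, chi (H x)) ^ 2 = ∑ x, ∑ u, chi (H x + H (x + u)) := by
        rw [sq, Finset.sum_mul_sum]
        refine Fintype.sum_congr _ _ fun x => ?_
        exact (Fintype.sum_equiv (Equiv.addLeft x) _ _ fun u => chi_add _ _).symm
    _ = ∑ u, ∑ x, chi (H x + H (x + u)) := Finset.sum_comm
    _ = ∑ x, chi (H x + H (x + 0)) := Fintype.sum_eq_single 0 hinner
    _ = Fintype.card V := by simp [CharTwo.add_self_eq_zero, chi]

end SecondDifference

lemma Finset.sum_range_mul_eq_sum_sum {M : Type*} [AddCommMonoid M] (g : ℕ → M) (a b : ℕ) :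
    ∑ i ∈ range (a * b), g i = ∑ k ∈ range a, ∑ i ∈ range b, g (k * b + i) := by
  induction a with
  | zero => simp
  | succ a ih => rw [Nat.succ_mul, Finset.sum_range_add, ih, Finset.sum_range_succ]

lemma Finset.sum_Icc_add_reflect {M : Type*} [AddCommMonoid M] (g : ℕ → M) {f : ℕ} (hf : Odd f) :
    ∑ i ∈ Icc 1 ((f - 1) / 2), (g i + g (f - i)) = ∑ i ∈ Ico 1 f, g i := by
  obtain ⟨k, rfl⟩ := hf
  have hk : (2 * k + 1 - 1) / 2 = k := by omega
  rw [hk, Finset.sum_add_distrib, ← Finset.sum_Ico_consecutive g (by omega : 1 ≤ k + 1)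
    (by omega : k + 1 ≤ 2 * k + 1), ← Finset.Ico_add_one_right_eq_Icc,
    Finset.sum_Ico_reflect _ _ (by omega : k + 1 ≤ 2 * k + 1 + 1)]
  congr 3
  omega

section CharTwo

variable {R : Type*} [CommRing R]

/-- `x` lies in the subfield `F_{2^E}`. -/
def FrobFixed (E : ℕ) (x : R) : Prop := x ^ 2 ^ E = x

lemma FrobFixed.mul {E : ℕ} {x y : R} (hx : FrobFixed E x) (hy : FrobFixed E y) :
    FrobFixed E (x * y) := by
  rw [FrobFixed, mul_pow, hx, hy]

lemma FrobFixed.pow {E : ℕ} {x : R} (hx : FrobFixed E x) (n : ℕ) : FrobFixed E (x ^ n) := by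
  rw [FrobFixed, ← pow_mul, mul_comm, pow_mul, hx]

lemma FrobFixed.of_dvd {e E : ℕ} {x : R} (hx : FrobFixed e x) (h : e ∣ E) : FrobFixed E x := by
  obtain ⟨k, rfl⟩ := h
  induction k with
  | zero => simp [FrobFixed]
  | succ k ih => rw [FrobFixed, Nat.mul_succ, pow_add, pow_mul, ih, hx]

lemma frobFixed_algebraMap_zmod [Algebra (ZMod 2) R] (E : ℕ) (s : ZMod 2) :
    FrobFixed E (algebraMap (ZMod 2) R s) := by
  rw [FrobFixed, ← map_pow, ZMod.pow_card_pow]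

/-- The power sum `∑_{i < f} x^{2^{ie}}`; on `F_{2^{ef}}` it is the relative trace onto
`F_{2^e}`. -/
def relTrace (e f : ℕ) (x : R) : R := ∑ i ∈ range f, x ^ 2 ^ (i * e)

lemma relTrace_zero (e f : ℕ) : relTrace e f (0 : R) = 0 :=
  Finset.sum_eq_zero fun _ _ => zero_pow (by positivity)

lemma relTrace_one_right (e : ℕ) (x : R) : relTrace e 1 x = x := by
  simp [relTrace]

lemma relTrace_mul_left {e : ℕ} (f : ℕ) {k : R} (hk : FrobFixed e k) (x : R) :
    relTrace e f (k * x) = k * relTrace e f x := by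
  have hk' : ∀ i, k ^ 2 ^ (i * e) = k := fun i => hk.of_dvd (dvd_mul_left e i)
  simp only [relTrace, Finset.mul_sum, mul_pow, hk']

variable [CharP R 2]

lemma FrobFixed.add {E : ℕ} {x y : R} (hx : FrobFixed E x) (hy : FrobFixed E y) :
    FrobFixed E (x + y) := by
  rw [FrobFixed, add_pow_char_pow, hx, hy]

lemma frobFixed_sum {E : ℕ} {ι : Type*} (s : Finset ι) {g : ι → R}
    (h : ∀ i ∈ s, FrobFixed E (g i)) : FrobFixed E (∑ i ∈ s, g i) := by
  rw [FrobFixed, sum_pow_char_pow]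
  exact Finset.sum_congr rfl h

lemma relTrace_add (e f : ℕ) (x y : R) :
    relTrace e f (x + y) = relTrace e f x + relTrace e f y := by
  simp only [relTrace, add_pow_char_pow, Finset.sum_add_distrib]

lemma relTrace_sq (e f : ℕ) (x : R) : relTrace e f x ^ 2 = relTrace e f (x ^ 2) := by
  simp only [relTrace, CharTwo.sum_sq, ← pow_mul, mul_comm]

lemma relTrace_one (e : ℕ) {f : ℕ} (hf : Odd f) : relTrace e f (1 : R) = 1 := by
  obtain ⟨k, rfl⟩ := hf
  simp [relTrace, CharTwo.two_eq_zero]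

lemma frobFixed_relTrace {e f : ℕ} {x : R} (hx : FrobFixed (f * e) x) :
    FrobFixed e (relTrace e f x) := by
  have hshift : ∀ i, (x ^ 2 ^ (i * e)) ^ 2 ^ e = x ^ 2 ^ ((i + 1) * e) := fun i => by
    rw [← pow_mul, ← pow_add, add_one_mul]
  have h := Finset.sum_range_succ' (fun i => x ^ 2 ^ (i * e)) f
  rw [Finset.sum_range_succ, zero_mul, pow_zero, pow_one, hx] at h
  rw [FrobFixed, relTrace, sum_pow_char_pow]
  simp only [hshift]
  exact (add_right_cancel h).symm

lemma frobFixed_relTrace_of_dvd {b c : ℕ} (h : b ∣ c) {x : R} (hx : FrobFixed c x) :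
    FrobFixed b (relTrace b (c / b) x) :=
  frobFixed_relTrace (by rwa [Nat.div_mul_cancel h])

lemma relTrace_mul_right (e a b : ℕ) (x : R) :
    relTrace e (a * b) x = relTrace e b (relTrace (e * b) a x) := by
  simp only [relTrace, sum_pow_char_pow, ← pow_mul, ← pow_add]
  rw [Finset.sum_range_mul_eq_sum_sum, Finset.sum_comm]
  refine Finset.sum_congr rfl fun i _ => Finset.sum_congr rfl fun k _ => ?_
  ring_nf

lemma relTrace_div_tower {a b c : ℕ} (hab : a ∣ b) (hbc : b ∣ c) (hb : 0 < b) (x : R) :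
    relTrace a (c / a) x = relTrace a (b / a) (relTrace b (c / b) x) := by
  obtain ⟨p, rfl⟩ := hab
  obtain ⟨q, rfl⟩ := hbc
  have ha : 0 < a := Nat.pos_of_mul_pos_right hb
  rw [Nat.mul_div_cancel_left _ hb, Nat.mul_div_cancel_left _ ha, mul_assoc,
    Nat.mul_div_cancel_left _ ha, mul_comm p q, relTrace_mul_right]

lemma relTrace_add_mul_of_frobFixed {E f : ℕ} (hf : Odd f) {B C : R} (hB : FrobFixed E B)
    (hC : FrobFixed E C) (t : R) : relTrace E f (B + C * t) = B + C * relTrace E f t := by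
  rw [relTrace_add, relTrace_mul_left f hC, ← mul_one B, relTrace_mul_left f hB,
    relTrace_one E hf]

end CharTwo

section Radical

variable {F : Type*} [Field F]

/-- The data `(e, γ)` of the construction, with the top level `e l` only required to be odd. -/
structure Admissible (l : ℕ) (e : ℕ → ℕ) (γ : ℕ → F) : Prop where
  e_zero : e 0 = 1
  dvd_succ : ∀ i < l, e i ∣ e (i + 1)
  odd : Odd (e l)
  frobFixed : ∀ j < l, FrobFixed (e j) (γ j)
  sum_ne_zero : ∀ j < l, ∑ i ∈ range (j + 1), γ i ≠ 0

variable {l : ℕ} {e : ℕ → ℕ} {γ : ℕ → F}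

lemma Admissible.dvd (hA : Admissible l e γ) {i j : ℕ} (hij : i ≤ j) (hj : j ≤ l) :
    e i ∣ e j := by
  induction j, hij using Nat.le_induction with
  | base => exact dvd_rfl
  | succ j _ ih => exact (ih (by omega)).trans (hA.dvd_succ j (by omega))

lemma Admissible.pos (hA : Admissible l e γ) {j : ℕ} (hj : j ≤ l) : 0 < e j :=
  (hA.odd.of_dvd_nat (hA.dvd hj le_rfl)).pos

lemma Admissible.pred (hA : Admissible (l + 1) e γ) : Admissible l e γ where
  e_zero := hA.e_zero
  dvd_succ i hi := hA.dvd_succ i (by omega)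
  odd := hA.odd.of_dvd_nat (hA.dvd_succ l (by omega))
  frobFixed j hj := hA.frobFixed j (by omega)
  sum_ne_zero j hj := hA.sum_ne_zero j (by omega)

lemma Admissible.odd_div (hA : Admissible (l + 1) e γ) : Odd (e (l + 1) / e l) := by
  have h := hA.odd
  rw [← Nat.mul_div_cancel' (hA.dvd_succ l (by omega))] at h
  exact (Nat.odd_mul.mp h).2

variable (l e γ) in
def weightedTraceSum (n : ℕ) (x : F) : F := ∑ j ∈ range l, γ j ^ 2 * relTrace (e j) (n / e j) x

variable (l e γ) in
/-- The map `Ψ_l`: for `c = a + b ≠ 0`, a point `(u₁, u₂)` lies in the radical of the second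
differences of `f(a x₁, x₂) + f(b x₁, x₂ + ε)` iff `Tr(c u₁) = 0` and
`radicalMap l e γ (m - 1) (a / c) (c u₁) = u₂`. -/
def radicalMap (n : ℕ) (t Y : F) : F :=
  weightedTraceSum l e γ n (t * Y) + (1 + t) * weightedTraceSum l e γ n Y
    + (∑ i ∈ range l, γ i) ^ 2 * Y

variable (l e γ) in
def polarMap (n : ℕ) (v : F) : F := weightedTraceSum l e γ n v + (∑ i ∈ range l, γ i) ^ 2 * v

lemma weightedTraceSum_zero (n : ℕ) : weightedTraceSum l e γ n 0 = 0 := by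
  simp [weightedTraceSum, relTrace_zero]

variable [CharP F 2]

lemma relTrace_mul_of_eq_add_mul {E f : ℕ} (hf : Odd f) {A B C t Y : F} (hA0 : A ≠ 0)
    (hA : FrobFixed E A) (hB : FrobFixed E B) (hC : FrobFixed E C) (h : A * Y = B + C * t) :
    relTrace E f (t * Y) = relTrace E f t * relTrace E f Y := by
  have htY : A * (t * Y) = B * t + C * t ^ 2 := by rw [mul_left_comm, h]; ring
  have hY : A * relTrace E f Y = B + C * relTrace E f t := by
    rw [← relTrace_mul_left f hA, h, relTrace_add_mul_of_frobFixed hf hB hC]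
  apply mul_left_cancel₀ hA0
  rw [← relTrace_mul_left f hA, htY, relTrace_add, relTrace_mul_left f hB,
    relTrace_mul_left f hC, ← relTrace_sq, mul_left_comm, hY]
  ring

lemma weightedTraceSum_succ (hA : Admissible (l + 1) e γ) (x : F) :
    weightedTraceSum (l + 1) e γ (e (l + 1)) x
      = weightedTraceSum l e γ (e l) (relTrace (e l) (e (l + 1) / e l) x)
        + γ l ^ 2 * relTrace (e l) (e (l + 1) / e l) x := by
  rw [weightedTraceSum, Finset.sum_range_succ, weightedTraceSum]
  congr 1
  refine Finset.sum_congr rfl fun j hj => ?_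
  rw [relTrace_div_tower (hA.dvd (by simp at hj; omega) le_self_add) (hA.dvd_succ l (by omega))
    (hA.pos (by omega))]

lemma frobFixed_weightedTraceSum (hA : Admissible l e γ) {k n : ℕ} (hk : ∀ j < l, e j ∣ k)
    (hn : ∀ j < l, e j ∣ n) {x : F} (hx : FrobFixed n x) :
    FrobFixed k (weightedTraceSum l e γ n x) := by
  refine frobFixed_sum _ fun j hj => ?_
  have hj : j < l := Finset.mem_range.mp hj
  exact (((hA.frobFixed j hj).pow 2).mul (frobFixed_relTrace_of_dvd (hn j hj) hx)).of_dvd (hk j hj)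

lemma frobFixed_sq_sum (hA : Admissible l e γ) {k : ℕ} (hk : ∀ j < l, e j ∣ k) :
    FrobFixed k ((∑ i ∈ range l, γ i) ^ 2) :=
  (frobFixed_sum _ fun j hj => (hA.frobFixed j (Finset.mem_range.mp hj)).of_dvd
    (hk j (Finset.mem_range.mp hj))).pow 2

lemma weightedTraceSum_add (n : ℕ) (x y : F) :
    weightedTraceSum l e γ n (x + y) = weightedTraceSum l e γ n x + weightedTraceSum l e γ n y := by
  simp only [weightedTraceSum, relTrace_add, mul_add, Finset.sum_add_distrib]

variable (l e γ) in
lemma mul_polarMap_add_mul_polarMap (n : ℕ) (c t u : F) :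
    c * t * polarMap l e γ n (c * t * u) + c * (1 + t) * polarMap l e γ n (c * (1 + t) * u)
      = c * radicalMap l e γ n t (c * u) := by
  rw [show c * t * u = t * (c * u) by ring, show c * (1 + t) * u = c * u + t * (c * u) by ring]
  simp only [polarMap, radicalMap, weightedTraceSum_add]
  grind

lemma radicalMap_descent (hA : Admissible (l + 1) e γ) {t Y s : F}
    (ht : FrobFixed (e (l + 1)) t) (hY : FrobFixed (e (l + 1)) Y) (hs : FrobFixed 1 s)
    (h : radicalMap (l + 1) e γ (e (l + 1)) t Y = s) :
    relTrace (e l) (e (l + 1) / e l) (t * Y)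
        = relTrace (e l) (e (l + 1) / e l) t * relTrace (e l) (e (l + 1) / e l) Y ∧
      radicalMap l e γ (e l) (relTrace (e l) (e (l + 1) / e l) t)
        (relTrace (e l) (e (l + 1) / e l) Y) = s := by
  set T : F → F := relTrace (e l) (e (l + 1) / e l)
  set W : F → F := weightedTraceSum (l + 1) e γ (e (l + 1))
  set G := ∑ i ∈ range (l + 1), γ i
  have hdvd : ∀ j < l + 1, e j ∣ e l := fun j hj => hA.dvd (by omega) (by omega)
  have hW : ∀ {x : F}, FrobFixed (e (l + 1)) x → FrobFixed (e l) (W x) := fun hx =>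
    frobFixed_weightedTraceSum hA hdvd (fun j hj => hA.dvd (by omega) le_rfl) hx
  have hG : FrobFixed (e l) (G ^ 2) := frobFixed_sq_sum hA hdvd
  have hlin : G ^ 2 * Y = (s + W (t * Y) + W Y) + W Y * t := by
    rw [← h, radicalMap]
    grind
  have hB : FrobFixed (e l) (s + W (t * Y) + W Y) :=
    ((hs.of_dvd (one_dvd _)).add (hW (ht.mul hY))).add (hW hY)
  have hmul : T (t * Y) = T t * T Y := relTrace_mul_of_eq_add_mul hA.odd_div
    (pow_ne_zero 2 (hA.sum_ne_zero l (by omega))) hG hB (hW hY) hlin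
  have hTY : G ^ 2 * T Y = (s + W (t * Y) + W Y) + W Y * T t := by
    rw [← relTrace_mul_left _ hG, hlin, relTrace_add_mul_of_frobFixed hA.odd_div hB (hW hY)]
  refine ⟨hmul, ?_⟩
  have hWs : ∀ x, W x = weightedTraceSum l e γ (e l) (T x) + γ l ^ 2 * T x :=
    weightedTraceSum_succ hA
  have hGs : G ^ 2 = (∑ i ∈ range l, γ i) ^ 2 + γ l ^ 2 := by
    rw [← CharTwo.add_sq, ← Finset.sum_range_succ]
  rw [hWs, hWs, hmul, hGs] at hTY
  rw [radicalMap]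
  grind

theorem eq_zero_of_radicalMap_eq (hA : Admissible l e γ) {t Y s : F} (ht : FrobFixed (e l) t)
    (hY : FrobFixed (e l) Y) (hs : FrobFixed 1 s) (h : radicalMap l e γ (e l) t Y = s)
    (htr : relTrace 1 (e l) Y = 0) : Y = 0 ∧ s = 0 := by
  induction l generalizing t Y with
  | zero =>
    simp only [radicalMap, weightedTraceSum, Finset.range_zero, Finset.sum_empty] at h
    rw [hA.e_zero, relTrace_one_right] at htr
    exact ⟨htr, by simpa using h.symm⟩
  | succ l ih =>
    have hdvd := hA.dvd_succ l (by omega)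
    obtain ⟨hmul, hrad⟩ := radicalMap_descent hA ht hY hs h
    have htower :
        relTrace 1 (e (l + 1)) Y = relTrace 1 (e l) (relTrace (e l) (e (l + 1) / e l) Y) := by
      simpa only [Nat.div_one] using relTrace_div_tower (one_dvd (e l)) hdvd (hA.pos le_self_add) Y
    obtain ⟨hu, rfl⟩ := ih hA.pred (frobFixed_relTrace_of_dvd hdvd ht)
      (frobFixed_relTrace_of_dvd hdvd hY) hrad (htower ▸ htr)
    refine ⟨?_, rfl⟩
    rw [radicalMap, weightedTraceSum_succ hA, weightedTraceSum_succ hA, hmul, hu, mul_zero,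
      mul_zero, weightedTraceSum_zero, add_zero, zero_add, mul_zero, zero_add] at h
    simpa [hA.sum_ne_zero l (by omega)] using h

end Radical

section Trace

variable {N : ℕ}

lemma card_fq (hN : N ≠ 0) : Fintype.card (Fq N) = 2 ^ N := by
  rw [← Nat.card_eq_fintype_card, GaloisField.card 2 N hN]

lemma tr1_add (x y : Fq N) : tr1 N (x + y) = tr1 N x + tr1 N y := map_add _ x y

lemma frobFixed_fq (hN : N ≠ 0) (x : Fq N) : FrobFixed N x := by
  rw [FrobFixed, ← card_fq hN, FiniteField.pow_card]

lemma tr1_zero : tr1 N 0 = 0 := map_zero _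

lemma tr1_sum {ι : Type*} (s : Finset ι) (g : ι → Fq N) :
    tr1 N (∑ i ∈ s, g i) = ∑ i ∈ s, tr1 N (g i) := map_sum _ _ _

lemma tr1_algebraMap_mul (s : ZMod 2) (x : Fq N) :
    tr1 N (algebraMap (ZMod 2) (Fq N) s * x) = s * tr1 N x := by
  rw [← Algebra.smul_def]
  exact map_smul _ s x

lemma algebraMap_tr1 (hN : N ≠ 0) (x : Fq N) :
    algebraMap (ZMod 2) (Fq N) (tr1 N x) = relTrace 1 N x := by
  rw [tr1, FiniteField.algebraMap_trace_eq_sum_pow, GaloisField.finrank 2 hN, Nat.card_zmod]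
  simp [relTrace]

lemma tr1_pow_two_pow (k : ℕ) (x : Fq N) : tr1 N (x ^ 2 ^ k) = tr1 N x := by
  induction k with
  | zero => simp
  | succ k ih =>
    rw [pow_succ, pow_mul, ← ih]
    simpa [tr1, ZMod.card] using
      Algebra.trace_eq_of_algEquiv (FiniteField.frobeniusAlgEquivOfAlgebraic (ZMod 2) (Fq N))
        (x ^ 2 ^ k)

lemma tr1_pow_mul (hN : N ≠ 0) {k : ℕ} (hk : k ≤ N) (x y : Fq N) :
    tr1 N (x ^ 2 ^ k * y) = tr1 N (x * y ^ 2 ^ (N - k)) := by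
  rw [← tr1_pow_two_pow (N - k) (x ^ 2 ^ k * y), mul_pow, ← pow_mul, ← pow_add,
    Nat.add_sub_cancel' hk, ← card_fq hN, FiniteField.pow_card]

lemma eq_zero_of_forall_tr1_mul_eq_zero {d : Fq N} (h : ∀ x, tr1 N (x * d) = 0) : d = 0 :=
  (traceForm_nondegenerate (ZMod 2) (Fq N)).1 d fun x => by
    rw [Algebra.traceForm_apply, mul_comm]
    exact h x

end Trace

lemma tr1_sum_polarization {N e f : ℕ} (hN : N ≠ 0) (hef : e * f = N) (hf : Odd f)
    (y v : Fq N) :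
    tr1 N (∑ i ∈ Icc 1 ((f - 1) / 2),
        ((y + v) ^ (2 ^ (i * e) + 1) + y ^ (2 ^ (i * e) + 1) + v ^ (2 ^ (i * e) + 1)))
      = tr1 N (y * (relTrace e f v + v)) := by
  have hterm : ∀ i ∈ Icc 1 ((f - 1) / 2),
      tr1 N ((y + v) ^ (2 ^ (i * e) + 1) + y ^ (2 ^ (i * e) + 1) + v ^ (2 ^ (i * e) + 1))
        = tr1 N (y * (v ^ 2 ^ (i * e) + v ^ 2 ^ ((f - i) * e))) := by
    intro i hi
    have hi : i * e ≤ N := by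
      rw [← hef, mul_comm]
      exact Nat.mul_le_mul_left e (by simp at hi; omega)
    have hexp : (y + v) ^ (2 ^ (i * e) + 1) + y ^ (2 ^ (i * e) + 1) + v ^ (2 ^ (i * e) + 1)
        = y ^ 2 ^ (i * e) * v + y * v ^ 2 ^ (i * e) := by
      rw [pow_succ, add_pow_char_pow, pow_succ, pow_succ]
      grind
    rw [hexp, tr1_add, tr1_pow_mul hN hi, ← tr1_add, ← mul_add, add_comm,
      show N - i * e = (f - i) * e by rw [← hef, Nat.sub_mul, mul_comm]]
  rw [tr1_sum, Finset.sum_congr rfl hterm, ← tr1_sum, ← Finset.mul_sum,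
    Finset.sum_Icc_add_reflect (fun i => v ^ 2 ^ (i * e)) hf, relTrace,
    Finset.range_eq_Ico, Finset.sum_eq_sum_Ico_succ_bot hf.pos]
  simp only [zero_mul, pow_zero, pow_one]
  rw [add_comm v, add_assoc, CharTwo.add_self_eq_zero, add_zero]

lemma Qfun_polarization {m e : ℕ} (hm : Odd (m - 1)) (he : e ∣ m - 1) (y v : Fq (m - 1)) :
    Qfun m e (y + v) + Qfun m e y + Qfun m e v
      = tr1 (m - 1) (y * (relTrace e ((m - 1) / e) v + v)) := by
  rw [Qfun, Qfun, Qfun, ← tr1_add, ← tr1_add, ← Finset.sum_add_distrib, ← Finset.sum_add_distrib]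
  exact tr1_sum_polarization hm.pos.ne' (Nat.mul_div_cancel' he)
    (hm.of_dvd_nat (Nat.div_dvd_of_dvd he)) y v

theorem isBent_of_secondDiff (m : ℕ) (hm : Even m) (hm0 : 0 < m) (F : Fq (m - 1) × ZMod 2 → ZMod 2)
    (hadd : ∀ u x y, secondDiff F u (x + y) = secondDiff F u x + secondDiff F u y)
    (hrad : ∀ u, (∀ x, secondDiff F u x = 0) → u = 0) : IsBent m F := by
  intro lam nu
  simp only [walsh, add_assoc]
  have hlin : ∀ x y : Fq (m - 1) × ZMod 2, tr1 (m - 1) (lam * (x + y).1) + nu * (x + y).2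
      = (tr1 (m - 1) (lam * x.1) + nu * x.2) + (tr1 (m - 1) (lam * y.1) + nu * y.2) := by
    intro x y
    rw [Prod.fst_add, Prod.snd_add, mul_add, tr1_add]
    ring
  have hsd := secondDiff_add_of_additive (H := F)
    (φ := fun x => tr1 (m - 1) (lam * x.1) + nu * x.2) hlin
  have hcard : Fintype.card (Fq (m - 1) × ZMod 2) = 2 ^ (m / 2) * 2 ^ (m / 2) := by
    obtain ⟨k, rfl⟩ := hm
    rw [Fintype.card_prod, card_fq (by omega), ZMod.card, ← pow_succ, ← pow_add]
    congr 1
    omega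
  have hsq := sq_sum_chi_eq_card _ (fun u x y => by rw [hsd, hsd, hsd]; exact hadd u x y)
    (fun u hu => hrad u fun x => by rw [← hsd]; exact hu x)
  rw [hcard, Nat.cast_mul, ← sq] at hsq
  exact_mod_cast sq_eq_sq_iff_eq_or_eq_neg.mp hsq

theorem isCyclicBent_of_polarization (m : ℕ) (hm : Even m) (hm0 : 0 < m)
    (Q : Fq (m - 1) → ZMod 2) (K : Fq (m - 1) → Fq (m - 1))
    (hQ : ∀ y v, Q (y + v) + Q y + Q v = tr1 (m - 1) (y * K v))
    (hrad : ∀ a b : Fq (m - 1), a ≠ b → ∀ u (s : ZMod 2), tr1 (m - 1) ((a + b) * u) = 0 →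
      a * K (a * u) + b * K (b * u) = algebraMap (ZMod 2) _ s * (a + b) → u = 0 ∧ s = 0) :
    IsCyclicBent m fun x => Q x.1 + x.2 * tr1 (m - 1) x.1 := by
  intro a b hab ε
  set L : Fq (m - 1) → Fq (m - 1) := fun u => a * K (a * u) + b * K (b * u)
  have hQ0 : Q 0 = 0 := by
    have h := hQ 0 0
    rw [zero_mul, tr1_zero, add_zero] at h
    grind
  have hsd : ∀ u x : Fq (m - 1) × ZMod 2,
      secondDiff (fun x => Q (a * x.1) + x.2 * tr1 (m - 1) (a * x.1)
        + (Q (b * x.1) + (x.2 + ε) * tr1 (m - 1) (b * x.1))) u x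
      = tr1 (m - 1) (x.1 * L u.1) + x.2 * tr1 (m - 1) ((a + b) * u.1)
        + u.2 * tr1 (m - 1) ((a + b) * x.1) := by
    intro u x
    have hLx : tr1 (m - 1) (x.1 * L u.1)
        = tr1 (m - 1) (a * x.1 * K (a * u.1)) + tr1 (m - 1) (b * x.1 * K (b * u.1)) := by
      rw [← tr1_add]; congr 1; ring
    have ha := hQ (a * x.1) (a * u.1)
    have hb := hQ (b * x.1) (b * u.1)
    simp only [secondDiff, Prod.fst_add, Prod.snd_add, Prod.fst_zero, Prod.snd_zero, mul_add,
      add_mul, mul_zero, hQ0, tr1_zero, tr1_add] at ha hb hLx ⊢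
    grind
  show IsBent m fun x => Q (a * x.1) + x.2 * tr1 (m - 1) (a * x.1)
    + (Q (b * x.1) + (x.2 + ε) * tr1 (m - 1) (b * x.1))
  apply isBent_of_secondDiff m hm hm0
  · intro u x y
    rw [hsd, hsd, hsd, Prod.fst_add, Prod.snd_add, add_mul x.1, mul_add (a + b), tr1_add,
      tr1_add]
    ring
  · intro u hu
    have hc : tr1 (m - 1) ((a + b) * u.1) = 0 := by simpa [hsd, tr1_zero] using hu (0, 1)
    have hL : L u.1 = algebraMap (ZMod 2) _ u.2 * (a + b) := by
      rw [← CharTwo.add_eq_zero]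
      refine eq_zero_of_forall_tr1_mul_eq_zero fun v => ?_
      have h := hu (v, 0)
      rw [hsd] at h
      rw [mul_add, tr1_add, mul_left_comm, tr1_algebraMap_mul, mul_comm v (a + b)]
      simpa using h
    obtain ⟨h1, h2⟩ := hrad a b hab u.1 u.2 hc hL
    exact Prod.ext h1 h2

lemma sum_Qfun_polarization {m l : ℕ} {e : ℕ → ℕ} {γ : ℕ → Fq (m - 1)} (hm : Odd (m - 1))
    (he : ∀ j < l, e j ∣ m - 1) (hγ : ∀ j < l, FrobFixed (e j) (γ j)) (y v : Fq (m - 1)) :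
    (∑ j ∈ range l, Qfun m (e j) (γ j * (y + v))) + (∑ j ∈ range l, Qfun m (e j) (γ j * y))
        + ∑ j ∈ range l, Qfun m (e j) (γ j * v)
      = tr1 (m - 1) (y * polarMap l e γ (m - 1) v) := by
  have hterm : ∀ j ∈ range l, Qfun m (e j) (γ j * (y + v)) + Qfun m (e j) (γ j * y)
      + Qfun m (e j) (γ j * v)
        = tr1 (m - 1) (y * (γ j ^ 2 * relTrace (e j) ((m - 1) / e j) v + γ j ^ 2 * v)) := by
    intro j hj
    have hj := Finset.mem_range.mp hj
    rw [mul_add, Qfun_polarization hm (he j hj), relTrace_mul_left _ (hγ j hj)]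
    congr 1
    ring
  rw [← Finset.sum_add_distrib, ← Finset.sum_add_distrib, Finset.sum_congr rfl hterm, ← tr1_sum,
    ← Finset.mul_sum, Finset.sum_add_distrib, ← Finset.sum_mul, ← CharTwo.sum_sq]
  rfl

lemma radical_polarMap_trivial {m l : ℕ} {e : ℕ → ℕ} {γ : ℕ → Fq (m - 1)}
    (hA : Admissible l e γ) (hel : e l = m - 1) {a b : Fq (m - 1)} (hab : a ≠ b)
    {u : Fq (m - 1)} {s : ZMod 2} (htr : tr1 (m - 1) ((a + b) * u) = 0)
    (hK : a * polarMap l e γ (m - 1) (a * u) + b * polarMap l e γ (m - 1) (b * u)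
      = algebraMap (ZMod 2) _ s * (a + b)) : u = 0 ∧ s = 0 := by
  have hN : m - 1 ≠ 0 := hel ▸ (hA.pos le_rfl).ne'
  set c := a + b
  have hc : c ≠ 0 := fun h => hab (CharTwo.add_eq_zero.mp h)
  have hct : c * (a / c) = a := mul_div_cancel₀ a hc
  have hc1t : c * (1 + a / c) = b := by rw [mul_add, mul_one, hct]; grind
  have hrad := mul_polarMap_add_mul_polarMap l e γ (m - 1) c (a / c) u
  rw [hct, hc1t, hK, mul_comm] at hrad
  have hkey := eq_zero_of_radicalMap_eq hA (by rw [hel]; exact frobFixed_fq hN (a / c))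
    (by rw [hel]; exact frobFixed_fq hN (c * u)) (frobFixed_algebraMap_zmod 1 s)
    (by rw [hel]; exact (mul_left_cancel₀ hc hrad).symm)
    (by rw [hel, ← algebraMap_tr1 hN, htr, map_zero])
  exact ⟨(mul_eq_zero.mp hkey.1).resolve_left hc,
    (map_eq_zero_iff _ (algebraMap (ZMod 2) (Fq (m - 1))).injective).mp hkey.2⟩

theorem stmt2_general (m l : ℕ) (hm : Even m) (hm0 : 0 < m)
    (e : ℕ → ℕ)
    (he0 : e 0 = 1) (hel : e l = m - 1)
    (hdvd : ∀ i < l, e i ∣ e (i + 1))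
    (γ : ℕ → Fq (m - 1))
    (hγ : ∀ j < l, γ j ^ (2 ^ e j) = γ j)  -- γ_j ∈ F_{2^{e_j}}
    (hsum : ∀ j < l, ∑ i ∈ Finset.range (j + 1), γ i ≠ 0) :
    IsCyclicBent m fun x =>
      (∑ j ∈ Finset.range l, Qfun m (e j) (γ j * x.1)) + x.2 * tr1 (m - 1) x.1 := by
  have hodd : Odd (m - 1) := by
    obtain ⟨k, hk⟩ := hm
    exact ⟨k - 1, by omega⟩
  have hA : Admissible l e γ := ⟨he0, hdvd, hel ▸ hodd, hγ, hsum⟩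
  exact isCyclicBent_of_polarization m hm hm0 (fun y => ∑ j ∈ range l, Qfun m (e j) (γ j * y))
    (polarMap l e γ (m - 1))
    (sum_Qfun_polarization hodd (fun j hj => hel ▸ hA.dvd hj.le le_rfl) hγ)
    (fun _ _ hab _ _ => radical_polarMap_trivial hA hel hab)

/-- the general construction of cyclic bent functions. -/
theorem stmt2 (m l : ℕ) (hm : Even m) (hm0 : 0 < m) (hl : 0 < l)
    (e : ℕ → ℕ) (hpos : ∀ i ≤ l, 0 < e i)
    (he0 : e 0 = 1) (hel : e l = m - 1)
    (hdvd : ∀ i < l, e i ∣ e (i + 1)) (hne : ∀ i < l, e i ≠ e (i + 1))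
    (γ : ℕ → Fq (m - 1))
    (hγ : ∀ j < l, γ j ^ (2 ^ e j) = γ j)  -- γ_j ∈ F_{2^{e_j}}
    (hsum : ∀ j < l, ∑ i ∈ Finset.range (j + 1), γ i ≠ 0) :
    IsCyclicBent m fun x =>
      (∑ j ∈ Finset.range l, Qfun m (e j) (γ j * x.1)) + x.2 * tr1 (m - 1) x.1 :=
  stmt2_general m l hm hm0 e he0 hel hdvd γ hγ hsum
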